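/- arXiv:quant-ph/0304179 — 2 statements merged into one kernel-verified Lean document; each statement's English description precedes it below -/
import Mathlib

section
/- Let ρ1, ρ2 be density matrices on a finite-dimensional complex inner product space H, with a priori probabilities p1, p2 ≥ 0, p1 + p2 = 1. Assume support(ρ1) ∩ support(ρ2) = {0} and support(ρ1) + support(ρ2) = H. Set S1⊥ = support(ρ1)⊥ ∩ support(ρ2), S2⊥ = support(ρ2)⊥ ∩ support(ρ1), let H' be the orthogonal complement of S1⊥ + S2⊥ in H, let Π', Π_{S1⊥}, Π_{S2⊥} be the orthogonal projections onto H', S1⊥, S2⊥, assume N_i = Tr(ρ_i Π') > 0 and set ρ'_i = Π' ρ_i Π' / N_i, N = N1 p1 + N2 p2, p'_i = N_i p_i / N. If (G1, G2, G?) are positive semidefinite Hermitian operators with supports contained in H', G1 + G2 + G? = Π', Tr(ρ'1 G2) = 0 and Tr(ρ'2 G1) = 0, then (G1 + Π_{S2⊥}, G2 + Π_{S1⊥}, G?) is a USD POVM for (ρ1, ρ2) whose failure probability equals N·(p'1 Tr(ρ'1 G?) + p'2 Tr(ρ'2 G?)). -/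
open Matrix ComplexOrder

noncomputable section

abbrev Mat (n : ℕ) := Matrix (Fin n) (Fin n) ℂ

/-- The support (range) of a matrix, viewed as an operator on Euclidean space. -/
def MatSupport {n : ℕ} (A : Mat n) : Submodule ℂ (EuclideanSpace ℂ (Fin n)) :=
  LinearMap.range (Matrix.toEuclideanLin A)

/-- The matrix of the orthogonal projection onto a subspace of Euclidean space. -/
def projMat {n : ℕ} (K : Submodule ℂ (EuclideanSpace ℂ (Fin n))) : Mat n :=
  Matrix.toEuclideanLin.symm (K.subtype ∘ₗ K.orthogonalProjectionOnto.toLinearMap)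

/-- A density matrix: positive semidefinite (hence Hermitian) with trace one. -/
def IsDensity {n : ℕ} (ρ : Mat n) : Prop := ρ.PosSemidef ∧ ρ.trace = 1

/-- A USD POVM for the pair (ρ1, ρ2). -/
def IsUSD {n : ℕ} (ρ1 ρ2 F1 F2 Fq : Mat n) : Prop :=
  F1.PosSemidef ∧ F2.PosSemidef ∧ Fq.PosSemidef ∧ F1 + F2 + Fq = 1 ∧
  (ρ1 * F2).trace = 0 ∧ (ρ2 * F1).trace = 0

/-- Failure probability of a USD POVM with inconclusive element `Fq`. -/
def failQ {n : ℕ} (p1 p2 : ℝ) (ρ1 ρ2 Fq : Mat n) : ℝ :=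
  p1 * ((ρ1 * Fq).trace).re + p2 * ((ρ2 * Fq).trace).re

/-! ### Auxiliary lemmas -/

lemma toEuclideanLin_mul' {n : ℕ} (A B : Mat n) :
    Matrix.toEuclideanLin (A * B) =
      Matrix.toEuclideanLin A ∘ₗ Matrix.toEuclideanLin B := by
  apply LinearMap.ext
  intro x
  simp [Matrix.toEuclideanLin_apply, Matrix.mulVec_mulVec]

lemma toEuclideanLin_one' {n : ℕ} :
    Matrix.toEuclideanLin (1 : Mat n) = LinearMap.id := by
  apply LinearMap.ext
  intro x
  simp [Matrix.toEuclideanLin_apply, Matrix.one_mulVec]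

lemma projMat_lin {n : ℕ} (K : Submodule ℂ (EuclideanSpace ℂ (Fin n))) :
    Matrix.toEuclideanLin (projMat K) =
      K.subtype ∘ₗ K.orthogonalProjectionOnto.toLinearMap := by
  rw [projMat, LinearEquiv.apply_symm_apply]

lemma projMat_apply {n : ℕ} (K : Submodule ℂ (EuclideanSpace ℂ (Fin n)))
    (x : EuclideanSpace ℂ (Fin n)) :
    Matrix.toEuclideanLin (projMat K) x = (K.orthogonalProjectionOnto x : EuclideanSpace ℂ (Fin n)) := by
  rw [projMat_lin]; rfl

lemma projMat_isHermitian {n : ℕ} (K : Submodule ℂ (EuclideanSpace ℂ (Fin n))) :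
    (projMat K).IsHermitian := by
  rw [Matrix.isHermitian_iff_isSymmetric, projMat_lin]
  exact K.starProjection_isSymmetric

lemma projMat_mul_self {n : ℕ} (K : Submodule ℂ (EuclideanSpace ℂ (Fin n))) :
    projMat K * projMat K = projMat K := by
  apply Matrix.toEuclideanLin.injective
  rw [toEuclideanLin_mul']
  apply LinearMap.ext
  intro x
  simp only [LinearMap.comp_apply, projMat_apply]
  exact Submodule.starProjection_eq_self_iff.mpr (SetLike.coe_mem _)

lemma projMat_posSemidef {n : ℕ} (K : Submodule ℂ (EuclideanSpace ℂ (Fin n))) :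
    (projMat K).PosSemidef := by
  have h := Matrix.posSemidef_conjTranspose_mul_self (projMat K)
  rwa [(projMat_isHermitian K).eq, projMat_mul_self] at h

lemma projMat_add_orthogonal {n : ℕ} (K : Submodule ℂ (EuclideanSpace ℂ (Fin n))) :
    projMat K + projMat Kᗮ = 1 := by
  apply Matrix.toEuclideanLin.injective
  rw [map_add, toEuclideanLin_one']
  apply LinearMap.ext
  intro x
  simp only [LinearMap.add_apply, projMat_apply, LinearMap.id_apply]
  exact K.starProjection_add_starProjection_orthogonal x

lemma projMat_sup_of_orthogonal {n : ℕ} {K L : Submodule ℂ (EuclideanSpace ℂ (Fin n))}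
    (h : K ≤ Lᗮ) : projMat (K ⊔ L) = projMat K + projMat L := by
  have hLK : L ≤ Kᗮ := le_trans (Submodule.le_orthogonal_orthogonal L)
    (Submodule.orthogonal_le h)
  apply Matrix.toEuclideanLin.injective
  rw [map_add]
  apply LinearMap.ext
  intro x
  simp only [LinearMap.add_apply, projMat_apply]
  refine Submodule.eq_starProjection_of_mem_orthogonal ?_ ?_
  · exact Submodule.add_mem_sup (SetLike.coe_mem _) (SetLike.coe_mem _)
  · rw [← Submodule.inf_orthogonal]
    constructor
    · -- x - (PK x + PL x) ∈ Kᗮ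
      have h1 : x - (K.orthogonalProjectionOnto x : EuclideanSpace ℂ (Fin n)) ∈ Kᗮ :=
        Submodule.sub_starProjection_mem_orthogonal x
      have h2 : ((L.orthogonalProjectionOnto x : EuclideanSpace ℂ (Fin n))) ∈ Kᗮ :=
        hLK (SetLike.coe_mem _)
      have := Submodule.sub_mem Kᗮ h1 h2
      simpa [sub_sub] using this
    · have h1 : x - (L.orthogonalProjectionOnto x : EuclideanSpace ℂ (Fin n)) ∈ Lᗮ :=
        Submodule.sub_starProjection_mem_orthogonal x
      have h2 : ((K.orthogonalProjectionOnto x : EuclideanSpace ℂ (Fin n))) ∈ Lᗮ :=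
        h (SetLike.coe_mem _)
      have := Submodule.sub_mem Lᗮ h1 h2
      have heq : x - (L.orthogonalProjectionOnto x : EuclideanSpace ℂ (Fin n)) -
          (K.orthogonalProjectionOnto x : EuclideanSpace ℂ (Fin n)) =
          x - ((K.orthogonalProjectionOnto x : EuclideanSpace ℂ (Fin n)) +
            (L.orthogonalProjectionOnto x : EuclideanSpace ℂ (Fin n))) := by abel
      rwa [heq] at this

/-- If `ρ` is Hermitian and `K` is orthogonal to the support of `ρ`, then `ρ · Π_K = 0`. -/
lemma mul_projMat_eq_zero {n : ℕ} {ρ : Mat n} (hρ : ρ.IsHermitian)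
    {K : Submodule ℂ (EuclideanSpace ℂ (Fin n))} (hK : K ≤ (MatSupport ρ)ᗮ) :
    ρ * projMat K = 0 := by
  apply Matrix.toEuclideanLin.injective
  rw [toEuclideanLin_mul', map_zero]
  apply LinearMap.ext
  intro x
  simp only [LinearMap.comp_apply, projMat_apply, LinearMap.zero_apply]
  set T := Matrix.toEuclideanLin ρ with hT
  have hsym : T.IsSymmetric := Matrix.isHermitian_iff_isSymmetric.mp hρ
  set v : EuclideanSpace ℂ (Fin n) := (K.orthogonalProjectionOnto x : EuclideanSpace ℂ (Fin n))
  have hv : v ∈ (MatSupport ρ)ᗮ := hK (SetLike.coe_mem _)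
  have : inner ℂ (T v) (T v) = (0 : ℂ) := by
    rw [hsym v (T v)]
    exact ((Submodule.mem_orthogonal' _ v).mp hv) (T (T v)) (LinearMap.mem_range_self T (T v))
  exact inner_self_eq_zero.mp this

/-- If `G` is Hermitian and its support lies in `H'`, then `Π_{H'} · G = G`. -/
lemma projMat_mul_of_support_le {n : ℕ} {G : Mat n} (hG : G.IsHermitian)
    {H' : Submodule ℂ (EuclideanSpace ℂ (Fin n))} (hsupp : MatSupport G ≤ H') :
    projMat H' * G = G := by
  apply Matrix.toEuclideanLin.injective
  rw [toEuclideanLin_mul']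
  apply LinearMap.ext
  intro x
  simp only [LinearMap.comp_apply, projMat_apply]
  exact Submodule.starProjection_eq_self_iff.mpr
    (hsupp (LinearMap.mem_range_self (Matrix.toEuclideanLin G) x))

lemma mul_projMat_of_support_le {n : ℕ} {G : Mat n} (hG : G.IsHermitian)
    {H' : Submodule ℂ (EuclideanSpace ℂ (Fin n))} (hsupp : MatSupport G ≤ H') :
    G * projMat H' = G := by
  have h := congrArg Matrix.conjTranspose (projMat_mul_of_support_le hG hsupp)
  rwa [Matrix.conjTranspose_mul, (projMat_isHermitian H').eq, hG.eq] at h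


/-- In the case of supports with trivial intersection spanning the whole
space, any USD POVM `(G1, G2, Gq)` for the reduced problem `(ρ1', ρ2')`, supported on the
orthogonal complement `H'` of `S1⊥ ⊔ S2⊥` and summing to the projection `P'` onto `H'`,
lifts to the USD POVM `(G1 + Π_{S2⊥}, G2 + Π_{S1⊥}, Gq)` for `(ρ1, ρ2)`, whose failure
probability equals `N·(p1' Tr(ρ1' Gq) + p2' Tr(ρ2' Gq))`. -/
theorem usd_povm_lift_orthogonal_subspaces {n : ℕ} (ρ1 ρ2 : Mat n)
    (h1 : IsDensity ρ1) (h2 : IsDensity ρ2)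
    (p1 p2 : ℝ) (hp1 : 0 ≤ p1) (hp2 : 0 ≤ p2) (hp : p1 + p2 = 1)
    (hdisj : MatSupport ρ1 ⊓ MatSupport ρ2 = ⊥)
    (hspan : MatSupport ρ1 ⊔ MatSupport ρ2 = ⊤)
    (S1p S2p : Submodule ℂ (EuclideanSpace ℂ (Fin n)))
    (hS1p : S1p = (MatSupport ρ1)ᗮ ⊓ MatSupport ρ2)
    (hS2p : S2p = (MatSupport ρ2)ᗮ ⊓ MatSupport ρ1)
    (H' : Submodule ℂ (EuclideanSpace ℂ (Fin n))) (hH' : H' = (S1p ⊔ S2p)ᗮ)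
    (P' : Mat n) (hP' : P' = projMat H')
    (N1 N2 : ℝ) (hN1 : N1 = ((ρ1 * P').trace).re) (hN2 : N2 = ((ρ2 * P').trace).re)
    (hN1pos : 0 < N1) (hN2pos : 0 < N2)
    (ρ1' ρ2' : Mat n)
    (hρ1' : ρ1' = ((N1 : ℂ))⁻¹ • (P' * ρ1 * P'))
    (hρ2' : ρ2' = ((N2 : ℂ))⁻¹ • (P' * ρ2 * P'))
    (N : ℝ) (hN : N = N1 * p1 + N2 * p2)
    (p1' p2' : ℝ) (hp1' : p1' = N1 * p1 / N) (hp2' : p2' = N2 * p2 / N)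
    (G1 G2 Gq : Mat n)
    (hG1 : G1.PosSemidef) (hG2 : G2.PosSemidef) (hGq : Gq.PosSemidef)
    (hG1supp : MatSupport G1 ≤ H') (hG2supp : MatSupport G2 ≤ H')
    (hGqsupp : MatSupport Gq ≤ H')
    (hsum : G1 + G2 + Gq = P')
    (htr1 : (ρ1' * G2).trace = 0) (htr2 : (ρ2' * G1).trace = 0) :
    IsUSD ρ1 ρ2 (G1 + projMat S2p) (G2 + projMat S1p) Gq ∧
    failQ p1 p2 ρ1 ρ2 Gq = N * failQ p1' p2' ρ1' ρ2' Gq := by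
  -- orthogonality of S1p and S2p
  have horth : S1p ≤ S2pᗮ := by
    rw [hS1p, hS2p]
    refine le_trans inf_le_right ?_
    refine le_trans (Submodule.le_orthogonal_orthogonal _) ?_
    exact Submodule.orthogonal_le inf_le_left
  -- projections sum to 1
  have hsum_one : projMat S1p + projMat S2p + P' = 1 := by
    rw [hP', hH', ← projMat_sup_of_orthogonal horth]
    exact projMat_add_orthogonal (S1p ⊔ S2p)
  -- annihilation
  have zero1 : ρ1 * projMat S1p = 0 :=
    mul_projMat_eq_zero h1.1.isHermitian (hS1p ▸ inf_le_left)
  have zero2 : ρ2 * projMat S2p = 0 :=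
    mul_projMat_eq_zero h2.1.isHermitian (hS2p ▸ inf_le_left)
  -- sandwich identities
  have hPl : ∀ G : Mat n, G.IsHermitian → MatSupport G ≤ H' → P' * G = G := by
    intro G hG hs; rw [hP']; exact projMat_mul_of_support_le hG hs
  have hPr : ∀ G : Mat n, G.IsHermitian → MatSupport G ≤ H' → G * P' = G := by
    intro G hG hs; rw [hP']; exact mul_projMat_of_support_le hG hs
  -- trace identity through the sandwich
  have tr_eq : ∀ (ρ G : Mat n), P' * G = G → G * P' = G →
      (P' * ρ * P' * G).trace = (ρ * G).trace := by
    intro ρ G hl hr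
    calc (P' * ρ * P' * G).trace = (P' * (ρ * G)).trace := by
          rw [mul_assoc (P' * ρ), hl, mul_assoc]
      _ = ((ρ * G) * P').trace := Matrix.trace_mul_comm _ _
      _ = (ρ * G).trace := by rw [mul_assoc, hr]
  have hN1ne : (N1 : ℂ) ≠ 0 := by
    exact_mod_cast Complex.ofReal_ne_zero.mpr (ne_of_gt hN1pos)
  have hN2ne : (N2 : ℂ) ≠ 0 := by
    exact_mod_cast Complex.ofReal_ne_zero.mpr (ne_of_gt hN2pos)
  -- reduced traces vs original traces
  have trρ1' : ∀ G : Mat n, P' * G = G → G * P' = G →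
      (ρ1' * G).trace = ((N1 : ℂ))⁻¹ * (ρ1 * G).trace := by
    intro G hl hr
    rw [hρ1', Matrix.smul_mul, Matrix.trace_smul, tr_eq ρ1 G hl hr, smul_eq_mul]
  have trρ2' : ∀ G : Mat n, P' * G = G → G * P' = G →
      (ρ2' * G).trace = ((N2 : ℂ))⁻¹ * (ρ2 * G).trace := by
    intro G hl hr
    rw [hρ2', Matrix.smul_mul, Matrix.trace_smul, tr_eq ρ2 G hl hr, smul_eq_mul]
  have hG2l := hPl G2 hG2.isHermitian hG2supp
  have hG2r := hPr G2 hG2.isHermitian hG2supp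
  have hG1l := hPl G1 hG1.isHermitian hG1supp
  have hG1r := hPr G1 hG1.isHermitian hG1supp
  have hGql := hPl Gq hGq.isHermitian hGqsupp
  have hGqr := hPr Gq hGq.isHermitian hGqsupp
  have tr1 : (ρ1 * G2).trace = 0 := by
    have := htr1
    rw [trρ1' G2 hG2l hG2r] at this
    exact (mul_eq_zero.mp this).resolve_left (inv_ne_zero hN1ne)
  have tr2 : (ρ2 * G1).trace = 0 := by
    have := htr2
    rw [trρ2' G1 hG1l hG1r] at this
    exact (mul_eq_zero.mp this).resolve_left (inv_ne_zero hN2ne)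
  have hNpos : 0 < N := by
    rw [hN]
    rcases hp1.lt_or_eq with h | h
    · nlinarith [mul_pos hN1pos h, mul_nonneg hN2pos.le hp2]
    · have hp2' : p2 = 1 := by linarith
      rw [← h, hp2']
      simpa using hN2pos
  constructor
  · refine ⟨hG1.add (projMat_posSemidef S2p), hG2.add (projMat_posSemidef S1p), hGq, ?_, ?_, ?_⟩
    · calc G1 + projMat S2p + (G2 + projMat S1p) + Gq
          = (G1 + G2 + Gq) + (projMat S1p + projMat S2p) := by abel
        _ = 1 := by rw [hsum, ← hsum_one]; abel
    · rw [mul_add, Matrix.trace_add, tr1, zero1, Matrix.trace_zero, add_zero]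
    · rw [mul_add, Matrix.trace_add, tr2, zero2, Matrix.trace_zero, add_zero]
  · -- failure probability
    have e1 : ((ρ1' * Gq).trace).re = N1⁻¹ * ((ρ1 * Gq).trace).re := by
      rw [trρ1' Gq hGql hGqr, ← Complex.ofReal_inv, Complex.re_ofReal_mul]
    have e2 : ((ρ2' * Gq).trace).re = N2⁻¹ * ((ρ2 * Gq).trace).re := by
      rw [trρ2' Gq hGql hGqr, ← Complex.ofReal_inv, Complex.re_ofReal_mul]
    rw [failQ, failQ, e1, e2, hp1', hp2']
    field_simp
end
end

section
/- Let ρ_1, …, ρ_N be density matrices on a finite-dimensional complex inner product space with a priori probabilities p_1, …, p_N > 0 summing to 1, and let (F_1, …, F_N, F_?) be a USD POVM for {ρ_k}. Fix i and let H∩ = support(ρ_i) ∩ (Σ_{j ≠ i} support(ρ_j)). Then for every vector x ∈ H∩ one has F_k x = 0 for all k = 1, …, N and F_? x = x; consequently the failure probability Q = Σ_k p_k Tr(ρ_k F_?) satisfies Q ≥ Σ_k p_k Tr(ρ_k Π∩), where Π∩ is the orthogonal projection onto H∩. -/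
open Matrix ComplexOrder

noncomputable section

/-- A USD POVM for a family of density matrices `ρ 1, …, ρ N`: positive semidefinite
elements `F k` identifying `ρ k`, plus an inconclusive element `Fq`, summing to the
identity, with `Tr(ρ i · F k) = 0` whenever `i ≠ k`. -/
def IsUSDFamily {n N : ℕ} (ρ F : Fin N → Mat n) (Fq : Mat n) : Prop :=
  (∀ k, (F k).PosSemidef) ∧ Fq.PosSemidef ∧ (∑ k, F k) + Fq = 1 ∧
  ∀ i k, i ≠ k → (ρ i * F k).trace = 0

/-! ### Auxiliary lemmas -/

lemma aux_trace_conjTranspose_mul_self_nonneg {n : ℕ} (M : Mat n) :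
    0 ≤ (Mᴴ * M).trace := by
  rw [Matrix.trace]
  refine Finset.sum_nonneg fun j _ => ?_
  simp only [Matrix.diag_apply, Matrix.mul_apply, Matrix.conjTranspose_apply]
  exact Finset.sum_nonneg fun i _ => star_mul_self_nonneg _

lemma aux_eq_zero_of_trace_conjTranspose_mul_self {n : ℕ} {M : Mat n}
    (h : (Mᴴ * M).trace = 0) : M = 0 := by
  rw [Matrix.trace] at h
  have h1 : ∀ j ∈ Finset.univ, (0 : ℂ) ≤ (Mᴴ * M).diag j := by
    intro j _
    simp only [Matrix.diag_apply, Matrix.mul_apply, Matrix.conjTranspose_apply]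
    exact Finset.sum_nonneg fun i _ => star_mul_self_nonneg _
  have h2 := (Finset.sum_eq_zero_iff_of_nonneg h1).1 h
  ext i j
  have h3 := h2 j (Finset.mem_univ j)
  simp only [Matrix.diag_apply, Matrix.mul_apply, Matrix.conjTranspose_apply] at h3
  have h4 : ∀ k ∈ Finset.univ, (0 : ℂ) ≤ star (M k j) * M k j :=
    fun k _ => star_mul_self_nonneg _
  have h5 := (Finset.sum_eq_zero_iff_of_nonneg h4).1 h3 i (Finset.mem_univ i)
  have h6 : M i j = 0 := by
    rcases mul_eq_zero.1 h5 with h6 | h6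
    · simpa using h6
    · exact h6
  simp [h6]

open scoped MatrixOrder in
/-- The positive square root of a positive semidefinite matrix. -/
def Matrix.PosSemidef.sqrt {n : ℕ} {A : Mat n} (_hA : A.PosSemidef) : Mat n := CFC.sqrt A

open scoped MatrixOrder in
lemma Matrix.PosSemidef.posSemidef_sqrt {n : ℕ} {A : Mat n} (hA : A.PosSemidef) :
    hA.sqrt.PosSemidef :=
  (CFC.sqrt_nonneg A).posSemidef

open scoped MatrixOrder in
lemma Matrix.PosSemidef.sqrt_mul_self {n : ℕ} {A : Mat n} (hA : A.PosSemidef) :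
    hA.sqrt * hA.sqrt = A :=
  CFC.sqrt_mul_sqrt_self A hA.nonneg

lemma aux_trace_key {n : ℕ} {A B : Mat n} (hA : A.PosSemidef) (hB : B.PosSemidef) :
    (A * B).trace = ((hB.sqrt * hA.sqrt)ᴴ * (hB.sqrt * hA.sqrt)).trace := by
  have hS : hA.sqrtᴴ = hA.sqrt := hA.posSemidef_sqrt.1
  have hT : hB.sqrtᴴ = hB.sqrt := hB.posSemidef_sqrt.1
  have step : ((hB.sqrt * hA.sqrt)ᴴ * (hB.sqrt * hA.sqrt)).trace = (B * A).trace := by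
    rw [Matrix.conjTranspose_mul, hS, hT]
    rw [show (hA.sqrt * hB.sqrt) * (hB.sqrt * hA.sqrt)
        = hA.sqrt * (hB.sqrt * hB.sqrt * hA.sqrt) from by simp only [Matrix.mul_assoc]]
    rw [Matrix.trace_mul_comm hA.sqrt, hB.sqrt_mul_self, Matrix.mul_assoc, hA.sqrt_mul_self]
  rw [step, Matrix.trace_mul_comm]

lemma aux_trace_mul_nonneg {n : ℕ} {A B : Mat n} (hA : A.PosSemidef) (hB : B.PosSemidef) :
    0 ≤ (A * B).trace := by
  rw [aux_trace_key hA hB]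
  exact aux_trace_conjTranspose_mul_self_nonneg _

lemma aux_mul_eq_zero {n : ℕ} {A B : Mat n} (hA : A.PosSemidef) (hB : B.PosSemidef)
    (h : (A * B).trace = 0) : B * A = 0 := by
  rw [aux_trace_key hA hB] at h
  have hTS : hB.sqrt * hA.sqrt = 0 := aux_eq_zero_of_trace_conjTranspose_mul_self h
  have e : hB.sqrt * (hB.sqrt * hA.sqrt * hA.sqrt) = B * A := by
    simp only [← Matrix.mul_assoc]
    rw [hB.sqrt_mul_self, Matrix.mul_assoc, hA.sqrt_mul_self]
  rw [← e, hTS, Matrix.zero_mul, Matrix.mul_zero]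

lemma aux_support_le_ker {n : ℕ} {A B : Mat n} (h : B * A = 0) :
    MatSupport A ≤ LinearMap.ker (Matrix.toEuclideanLin B) := by
  rintro x ⟨y, rfl⟩
  rw [LinearMap.mem_ker]
  have e : Matrix.toEuclideanLin B (Matrix.toEuclideanLin A y)
      = Matrix.toEuclideanLin (B * A) y := by
    simp [Matrix.toEuclideanLin_apply, Matrix.mulVec_mulVec]
  rw [e, h, map_zero]
  rfl

/-- For a USD POVM for `N` density matrices, every vector `x` in
`H∩ = support(ρ i) ⊓ Σ_{j ≠ i} support(ρ j)` satisfies `F k x = 0` for all `k` and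
`Fq x = x`; consequently the failure probability is at least `Σ_k p_k Tr(ρ k Π∩)`. -/
theorem usd_family_common_subspace {n N : ℕ} (ρ : Fin N → Mat n) (p : Fin N → ℝ)
    (hρ : ∀ k, IsDensity (ρ k)) (hp : ∀ k, 0 < p k) (hpsum : ∑ k, p k = 1)
    (F : Fin N → Mat n) (Fq : Mat n) (hUSD : IsUSDFamily ρ F Fq)
    (i : Fin N)
    (Hcap : Submodule ℂ (EuclideanSpace ℂ (Fin n)))
    (hHcap : Hcap = MatSupport (ρ i) ⊓ (⨆ j, ⨆ _ : j ≠ i, MatSupport (ρ j))) :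
    (∀ x ∈ Hcap, (∀ k, Matrix.toEuclideanLin (F k) x = 0) ∧
        Matrix.toEuclideanLin Fq x = x) ∧
    ∑ k, p k * ((ρ k * projMat Hcap).trace).re ≤ ∑ k, p k * ((ρ k * Fq).trace).re := by
  obtain ⟨hFpos, hFqpos, hsum, horth⟩ := hUSD
  have hker : ∀ j k, j ≠ k →
      MatSupport (ρ j) ≤ LinearMap.ker (Matrix.toEuclideanLin (F k)) := by
    intro j k hjk
    exact aux_support_le_ker (aux_mul_eq_zero (hρ j).1 (hFpos k) (horth j k hjk))
  -- Part 1
  have hfix : ∀ x ∈ Hcap, (∀ k, Matrix.toEuclideanLin (F k) x = 0) ∧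
      Matrix.toEuclideanLin Fq x = x := by
    intro x hx
    rw [hHcap] at hx
    obtain ⟨hx1, hx2⟩ := hx
    have hFkx : ∀ k, Matrix.toEuclideanLin (F k) x = 0 := by
      intro k
      by_cases hk : k = i
      · subst hk
        have hle : (⨆ j, ⨆ _ : j ≠ k, MatSupport (ρ j))
            ≤ LinearMap.ker (Matrix.toEuclideanLin (F k)) :=
          iSup₂_le fun j hj => hker j k hj
        exact hle hx2
      · exact hker i k (fun h => hk h.symm) hx1
    refine ⟨hFkx, ?_⟩
    have h1 := congrArg (fun M => Matrix.toEuclideanLin M x) hsum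
    simp only [map_add, LinearMap.add_apply, map_sum, LinearMap.sum_apply] at h1
    rw [Finset.sum_eq_zero (fun k _ => hFkx k), zero_add] at h1
    rw [h1]
    simp [Matrix.toEuclideanLin_apply, Matrix.one_mulVec]
  refine ⟨hfix, ?_⟩
  -- Part 2
  set P := projMat Hcap with hP
  have hPlin : Matrix.toEuclideanLin P
      = Hcap.subtype ∘ₗ Hcap.orthogonalProjectionOnto.toLinearMap :=
    Matrix.toEuclideanLin.apply_symm_apply _
  have hPsymm : (Matrix.toEuclideanLin P).IsSymmetric := by
    intro u v
    rw [hPlin]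
    exact Submodule.inner_starProjection_left_eq_right Hcap u v
  have hPherm : P.IsHermitian := Matrix.isHermitian_iff_isSymmetric.2 hPsymm
  have hFqsymm : (Matrix.toEuclideanLin Fq).IsSymmetric :=
    Matrix.isHermitian_iff_isSymmetric.1 hFqpos.1
  have hdiff : (Fq - P).PosSemidef := by
    refine Matrix.PosSemidef.of_dotProduct_mulVec_nonneg ?_ ?_
    · exact hFqpos.1.sub hPherm
    · intro x
      set y : EuclideanSpace ℂ (Fin n) := (WithLp.equiv 2 (Fin n → ℂ)).symm x with hy
      have hquad : ∀ M : Mat n,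
          dotProduct (star x) (M *ᵥ x) = inner ℂ y (Matrix.toEuclideanLin M y) := by
        intro M
        rw [EuclideanSpace.inner_eq_star_dotProduct, dotProduct_comm]
        rfl
      rw [hquad]
      set u : EuclideanSpace ℂ (Fin n) := (Hcap.orthogonalProjectionOnto y : EuclideanSpace ℂ (Fin n)) with hu
      have humem : u ∈ Hcap := Submodule.coe_mem _
      have hvmem : y - u ∈ Hcapᗮ := Submodule.sub_starProjection_mem_orthogonal (K := Hcap) y
      have hFqu : Matrix.toEuclideanLin Fq u = u := (hfix u humem).2
      have hPy : Matrix.toEuclideanLin P y = u := by rw [hPlin]; rfl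
      set v := y - u with hv
      have hyuv : y = u + v := by rw [hv]; abel
      have e1 : Matrix.toEuclideanLin (Fq - P) y
          = Matrix.toEuclideanLin Fq v := by
        rw [map_sub, LinearMap.sub_apply, hPy]
        have : Matrix.toEuclideanLin Fq y = u + Matrix.toEuclideanLin Fq v := by
          conv_lhs => rw [hyuv]
          rw [map_add, hFqu]
        rw [this]
        abel
      rw [e1]
      have e2 : (inner ℂ y (Matrix.toEuclideanLin Fq v) : ℂ)
          = inner ℂ u (Matrix.toEuclideanLin Fq v) + inner ℂ v (Matrix.toEuclideanLin Fq v) := by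
        conv_lhs => rw [hyuv]
        rw [inner_add_left]
      have e3 : (inner ℂ u (Matrix.toEuclideanLin Fq v) : ℂ) = 0 := by
        rw [← hFqsymm u v, hFqu]
        exact hvmem u humem
      rw [e2, e3, zero_add]
      have := hFqpos.dotProduct_mulVec_nonneg (WithLp.equiv 2 (Fin n → ℂ) v)
      have hvv : ((WithLp.equiv 2 (Fin n → ℂ)).symm ((WithLp.equiv 2 (Fin n → ℂ)) v)) = v :=
        Equiv.symm_apply_apply _ _
      calc (0 : ℂ) ≤ dotProduct (star ((WithLp.equiv 2 (Fin n → ℂ)) v))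
            (Fq *ᵥ ((WithLp.equiv 2 (Fin n → ℂ)) v)) := this
        _ = inner ℂ v (Matrix.toEuclideanLin Fq v) := by
          rw [EuclideanSpace.inner_eq_star_dotProduct, dotProduct_comm]; rfl
  have hk : ∀ k, ((ρ k * P).trace).re ≤ ((ρ k * Fq).trace).re := by
    intro k
    have h0 : 0 ≤ (ρ k * (Fq - P)).trace := aux_trace_mul_nonneg (hρ k).1 hdiff
    have e : (ρ k * (Fq - P)).trace = (ρ k * Fq).trace - (ρ k * P).trace := by
      rw [Matrix.mul_sub, Matrix.trace_sub]
    rw [e] at h0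
    have := (Complex.le_def.1 h0).1
    simp only [Complex.zero_re, Complex.sub_re] at this
    linarith
  exact Finset.sum_le_sum fun k _ => mul_le_mul_of_nonneg_left (hk k) (hp k).le
end
end
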